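/- arXiv:2310.16633 — 2 statements merged into one kernel-verified Lean document; each statement's English description precedes it below -/
import Mathlib

section
/- For two continuous random variables X and Y with joint density f, marginal densities f_X and f_Y, and copula density c (so that f(x,y) = f_X(x) f_Y(y) c(F_X(x), F_Y(y))), the mutual information I(X;Y) equals the negative copula entropy: I(X;Y) = -H_c(X,Y), where H_c(X,Y) = -∫_{[0,1]^2} c(u,v) log c(u,v) du dv. -/
/-!
Sklar's factorisation turns the integrand of `I(X;Y)` into
`f_X(x) f_Y(y) · (c log c)(F_X x, F_Y y)`, so `I(X;Y)` is the integral of `c log c` against the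
push-forward of `P_X ⊗ P_Y` under `(F_X, F_Y)`. By the probability integral transform each `F`
pushes its law forward to the uniform distribution on `(0, 1)`, so this push-forward is Lebesgue
measure on the unit square.
-/

open MeasureTheory ProbabilityTheory Measure Set Filter

lemma Real.mul_mul_log_mul_div_left (w c : ℝ) :
    w * c * Real.log (w * c / w) = w * (c * Real.log c) := by
  rcases eq_or_ne w 0 with rfl | hw
  · simp
  · rw [mul_div_cancel_left₀ _ hw, mul_assoc]

section WithDensity

variable {α β : Type*} [MeasurableSpace α] [MeasurableSpace β]
  {μ : Measure α} {ν : Measure β}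

lemma isProbabilityMeasure_withDensity_ofReal {g : α → ℝ} (hg0 : ∀ x, 0 ≤ g x)
    (hg : Integrable g μ) (hg1 : ∫ x, g x ∂μ = 1) :
    IsProbabilityMeasure (μ.withDensity fun x ↦ ENNReal.ofReal (g x)) := by
  constructor
  rw [withDensity_apply _ MeasurableSet.univ, restrict_univ,
    ← ofReal_integral_eq_lintegral_ofReal hg (ae_of_all _ hg0), hg1, ENNReal.ofReal_one]

lemma integral_prod_withDensity_ofReal [SFinite μ] [SFinite ν] {gX : α → ℝ} {gY : β → ℝ}
    (hgX0 : ∀ x, 0 ≤ gX x) (hgY0 : ∀ y, 0 ≤ gY y) (hgX : AEMeasurable gX μ)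
    (hgY : AEMeasurable gY ν) (φ : α × β → ℝ) :
    ∫ p, φ p ∂(μ.withDensity (fun x ↦ ENNReal.ofReal (gX x))).prod
        (ν.withDensity fun y ↦ ENNReal.ofReal (gY y)) =
      ∫ p, gX p.1 * gY p.2 * φ p ∂μ.prod ν := by
  have hprod (p : α × β) : ENNReal.ofReal (gX p.1) * ENNReal.ofReal (gY p.2) =
      ENNReal.ofReal (gX p.1 * gY p.2) := (ENNReal.ofReal_mul (hgX0 p.1)).symm
  rw [prod_withDensity₀ hgX.ennreal_ofReal hgY.ennreal_ofReal, funext hprod,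
    integral_withDensity_eq_integral_toReal_smul₀ (by fun_prop)
      (ae_of_all _ fun _ ↦ ENNReal.ofReal_lt_top)]
  congr 1 with p
  rw [ENNReal.toReal_ofReal (mul_nonneg (hgX0 p.1) (hgY0 p.2)), smul_eq_mul]

end WithDensity

namespace ProbabilityTheory

variable {μ : Measure ℝ}

lemma cdf_mem_Ioo_of_strictMono (hmono : StrictMono (cdf μ)) (x : ℝ) : cdf μ x ∈ Ioo 0 1 :=
  ⟨(cdf_nonneg μ (x - 1)).trans_lt (hmono (sub_one_lt x)),
    (hmono (lt_add_one x)).trans_le (cdf_le_one μ _)⟩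

lemma Ioo_subset_range_cdf (hcont : Continuous (cdf μ)) : Ioo 0 1 ⊆ range (cdf μ) :=
  fun _ ht ↦ mem_range_of_exists_le_of_exists_ge hcont
    ((tendsto_cdf_atBot μ).eventually (eventually_le_nhds ht.1)).exists
    ((tendsto_cdf_atTop μ).eventually (eventually_ge_nhds ht.2)).exists

/-- Probability integral transform. -/
theorem map_cdf_eq_restrict_Ioo [IsProbabilityMeasure μ] (hmono : StrictMono (cdf μ))
    (hcont : Continuous (cdf μ)) :
    μ.map (cdf μ) = volume.restrict (Ioo 0 1) := by
  refine ext_of_Iic _ _ fun b ↦ ?_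
  rw [map_apply hcont.measurable measurableSet_Iic, restrict_Ioo_eq_restrict_Ioc,
    Measure.restrict_apply measurableSet_Iic, inter_comm, Ioc_inter_Iic, Real.volume_Ioc,
    sub_zero]
  rcases le_or_gt b 0 with hb0 | hb0
  · have : cdf μ ⁻¹' Iic b = ∅ :=
      eq_empty_of_forall_notMem fun x hx ↦
        hb0.not_gt ((cdf_mem_Ioo_of_strictMono hmono x).1.trans_le hx)
    rw [this, measure_empty, ENNReal.ofReal_eq_zero.2 (min_le_right _ _ |>.trans hb0)]
  rcases le_or_gt 1 b with hb1 | hb1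
  · have : cdf μ ⁻¹' Iic b = univ :=
      eq_univ_of_forall fun x ↦ ((cdf_mem_Ioo_of_strictMono hmono x).2.le.trans hb1)
    rw [this, measure_univ, min_eq_left hb1, ENNReal.ofReal_one]
  obtain ⟨x, rfl⟩ := Ioo_subset_range_cdf hcont ⟨hb0, hb1⟩
  have : cdf μ ⁻¹' Iic (cdf μ x) = Iic x := by ext; simp [hmono.le_iff_le]
  rw [this, min_eq_right hb1.le, ofReal_cdf]

lemma cdf_withDensity_ofReal {g : ℝ → ℝ} (hg0 : ∀ x, 0 ≤ g x) (hg : Integrable g)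
    [IsProbabilityMeasure (volume.withDensity fun x ↦ ENNReal.ofReal (g x))] (x : ℝ) :
    cdf (volume.withDensity fun x ↦ ENNReal.ofReal (g x)) x = ∫ t in Iic x, g t := by
  rw [cdf_eq_real, measureReal_def, withDensity_apply _ measurableSet_Iic,
    ← ofReal_integral_eq_lintegral_ofReal hg.integrableOn (ae_of_all _ hg0),
    ENNReal.toReal_ofReal (setIntegral_nonneg measurableSet_Iic fun t _ ↦ hg0 t)]

theorem map_withDensity_eq_restrict_Ioo {g F : ℝ → ℝ} (hg0 : ∀ x, 0 ≤ g x)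
    (hg : Integrable g) (hg1 : ∫ x, g x = 1) (hF : ∀ x, F x = ∫ t in Iic x, g t)
    (hmono : StrictMono F) (hcont : Continuous F) :
    (volume.withDensity fun x ↦ ENNReal.ofReal (g x)).map F = volume.restrict (Ioo 0 1) := by
  have := isProbabilityMeasure_withDensity_ofReal hg0 hg hg1
  obtain rfl : F = cdf _ := funext fun x ↦ (hF x).trans (cdf_withDensity_ofReal hg0 hg x).symm
  exact map_cdf_eq_restrict_Ioo hmono hcont

end ProbabilityTheory

theorem mutualInfo_eq_neg_copulaEntropy_general
    (f : ℝ × ℝ → ℝ) (fX fY FX FY : ℝ → ℝ) (c : ℝ × ℝ → ℝ)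
    (hc_meas : Measurable c)
    (hfX_nonneg : ∀ x, 0 ≤ fX x) (hfY_nonneg : ∀ y, 0 ≤ fY y)
    (hf_int : Integrable f) (hf_one : ∫ p, f p = 1)
    (hmargX : ∀ x, fX x = ∫ y, f (x, y))
    (hmargY : ∀ y, fY y = ∫ x, f (x, y))
    (hFX : ∀ x, FX x = ∫ t in Iic x, fX t)
    (hFY : ∀ y, FY y = ∫ t in Iic y, fY t)
    (hFX_mono : StrictMono FX) (hFY_mono : StrictMono FY)
    (hFX_cont : Continuous FX) (hFY_cont : Continuous FY)
    (hSklar : ∀ x y, f (x, y) = fX x * fY y * c (FX x, FY y)) :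
    (∫ p, f p * Real.log (f p / (fX p.1 * fY p.2))) =
      -(-∫ p in (Icc (0:ℝ) 1 ×ˢ Icc (0:ℝ) 1), c p * Real.log (c p)) := by
  have hfX : Integrable fX :=
    hf_int.integral_prod_left.congr (ae_of_all _ fun x ↦ (hmargX x).symm)
  have hfY : Integrable fY :=
    hf_int.integral_prod_right.congr (ae_of_all _ fun y ↦ (hmargY y).symm)
  have hfX_one : ∫ x, fX x = 1 := by
    simp_rw [hmargX]; rw [← integral_prod _ hf_int, ← volume_eq_prod, hf_one]
  have hfY_one : ∫ y, fY y = 1 := by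
    simp_rw [hmargY]; rw [← integral_prod_symm _ hf_int, ← volume_eq_prod, hf_one]
  have := isProbabilityMeasure_withDensity_ofReal hfX_nonneg hfX hfX_one
  have := isProbabilityMeasure_withDensity_ofReal hfY_nonneg hfY hfY_one
  have hsquare : ((volume.withDensity fun x ↦ ENNReal.ofReal (fX x)).prod
      (volume.withDensity fun y ↦ ENNReal.ofReal (fY y))).map (Prod.map FX FY) =
      volume.restrict (Icc (0:ℝ) 1 ×ˢ Icc (0:ℝ) 1) := by
    rw [← map_prod_map _ _ hFX_cont.measurable hFY_cont.measurable,
      map_withDensity_eq_restrict_Ioo hfX_nonneg hfX hfX_one hFX hFX_mono hFX_cont,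
      map_withDensity_eq_restrict_Ioo hfY_nonneg hfY hfY_one hFY hFY_mono hFY_cont,
      restrict_Ioo_eq_restrict_Icc, prod_restrict, ← volume_eq_prod]
  rw [neg_neg, ← hsquare, integral_map (by fun_prop) (by fun_prop),
    integral_prod_withDensity_ofReal hfX_nonneg hfY_nonneg hfX.aemeasurable hfY.aemeasurable,
    ← volume_eq_prod]
  congr 1 with ⟨x, y⟩
  rw [hSklar, Real.mul_mul_log_mul_div_left, Prod.map_apply]

/-- Mutual information equals negative copula entropy (Ma–Sun theorem, bivariate). -/
theorem mutualInfo_eq_neg_copulaEntropy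
    (f : ℝ × ℝ → ℝ) (fX fY FX FY : ℝ → ℝ) (c : ℝ × ℝ → ℝ)
    (hf_meas : Measurable f) (hc_meas : Measurable c)
    (hf_nonneg : ∀ p, 0 ≤ f p) (hfX_nonneg : ∀ x, 0 ≤ fX x) (hfY_nonneg : ∀ y, 0 ≤ fY y)
    (hf_int : Integrable f) (hf_one : ∫ p, f p = 1)
    (hmargX : ∀ x, fX x = ∫ y, f (x, y))
    (hmargY : ∀ y, fY y = ∫ x, f (x, y))
    (hFX : ∀ x, FX x = ∫ t in Iic x, fX t)
    (hFY : ∀ y, FY y = ∫ t in Iic y, fY t)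
    (hFX_mono : StrictMono FX) (hFY_mono : StrictMono FY)
    (hFX_cont : Continuous FX) (hFY_cont : Continuous FY)
    (hSklar : ∀ x y, f (x, y) = fX x * fY y * c (FX x, FY y))
    (hMI_int : Integrable (fun p => f p * Real.log (f p / (fX p.1 * fY p.2))))
    (hc_int : IntegrableOn (fun p => c p * Real.log (c p)) (Icc (0:ℝ) 1 ×ˢ Icc (0:ℝ) 1)) :
    (∫ p, f p * Real.log (f p / (fX p.1 * fY p.2))) =
      -(-∫ p in (Icc (0:ℝ) 1 ×ˢ Icc (0:ℝ) 1), c p * Real.log (c p)) :=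
  mutualInfo_eq_neg_copulaEntropy_general f fX fY FX FY c hc_meas hfX_nonneg hfY_nonneg hf_int
    hf_one hmargX hmargY hFX hFY hFX_mono hFY_mono hFX_cont hFY_cont hSklar
end

section
/- For a continuous random vector X = (X_1,...,X_n) with joint density, the joint differential entropy decomposes as H(X) = Σ_i H(X_i) + H_c(X), where H_c(X) is the copula entropy of X. -/
/-!
Sklar's factorisation gives `log f(x) = ∑ᵢ log fᵢ(xᵢ) + log c(F(x))` wherever `f(x) ≠ 0`, with
`F(x) = (Fᵢ(xᵢ))ᵢ`. Against the law `f(x) dx`, the `i`-th term only sees the `i`-th marginal law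
`fᵢ(t) dt`. For the last term, `f · log (c ∘ F) = (∏ᵢ fᵢ(xᵢ)) · (c log c) ∘ F`, and `F` pushes the
product of the marginal laws forward to Lebesgue measure on the unit cube (probability integral
transform), so this term integrates to `∫ c log c`.
-/

open MeasureTheory Set ProbabilityTheory

namespace MeasurableEquiv

variable {ι α : Type*} [DecidableEq ι] [MeasurableSpace α]

instance (i : ι) : Unique {j : ι // ¬ j ≠ i} :=
  ⟨⟨⟨i, not_not_intro rfl⟩⟩, fun ⟨_, h⟩ => Subtype.ext (not_not.mp h)⟩

def funSplitAt (i : ι) : (ι → α) ≃ᵐ α × ({j : ι // j ≠ i} → α) :=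
  ((piEquivPiSubtypeProd (fun _ => α) (· ≠ i)).trans
    ((refl _).prodCongr (piUnique fun _ : {j : ι // ¬ j ≠ i} => α))).trans prodComm

theorem funSplitAt_symm_apply (i : ι) (t : α) (y : {j : ι // j ≠ i} → α) :
    (funSplitAt i).symm (t, y) = fun j => if h : j = i then t else y ⟨j, h⟩ := by
  funext j
  by_cases h : j = i <;>
  simp [funSplitAt, piEquivPiSubtypeProd, piUnique, prodCongr, refl, prodComm,
    MeasurableEquiv.trans, Equiv.piEquivPiSubtypeProd, h, uniqueElim]

@[simp]
theorem funSplitAt_symm_apply_self (i : ι) (p : α × ({j : ι // j ≠ i} → α)) :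
    (funSplitAt i).symm p i = p.1 := by
  rw [← Prod.mk.eta (p := p), funSplitAt_symm_apply]
  simp

theorem measurePreserving_funSplitAt [Fintype ι] {α : Type*} [MeasureSpace α]
    [SigmaFinite (volume : Measure α)] (i : ι) :
    MeasurePreserving (funSplitAt (α := α) i) volume volume :=
  (Measure.measurePreserving_swap.comp
    ((MeasurePreserving.id _).prod (measurePreserving_piUnique _))).comp
    (volume_preserving_piEquivPiSubtypeProd _ _)

end MeasurableEquiv

section WithDensity

variable {X Y : Type*} [MeasurableSpace X] [MeasurableSpace Y] {μ : Measure X} {ρ : X → ℝ}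

theorem integral_withDensity_ofReal (hρ : Measurable ρ) (hρ_nonneg : ∀ x, 0 ≤ ρ x)
    (g : X → ℝ) :
    ∫ x, g x ∂μ.withDensity (fun x => ENNReal.ofReal (ρ x)) = ∫ x, ρ x * g x ∂μ := by
  refine (integral_withDensity_eq_integral_smul hρ.real_toNNReal g).trans
    (integral_congr_ae (.of_forall fun x => ?_))
  simp [NNReal.smul_def, Real.coe_toNNReal _ (hρ_nonneg x)]

theorem integrable_withDensity_ofReal_iff (hρ : Measurable ρ) (hρ_nonneg : ∀ x, 0 ≤ ρ x)
    {g : X → ℝ} :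
    Integrable g (μ.withDensity fun x => ENNReal.ofReal (ρ x)) ↔
      Integrable (fun x => ρ x * g x) μ := by
  refine (integrable_withDensity_iff_integrable_smul hρ.real_toNNReal).trans
    (integrable_congr (.of_forall fun x => ?_))
  simp [NNReal.smul_def, Real.coe_toNNReal _ (hρ_nonneg x)]

theorem isProbabilityMeasure_withDensity_ofReal_s1 (hρ_int : Integrable ρ μ)
    (hρ_nonneg : ∀ x, 0 ≤ ρ x) (hρ_one : ∫ x, ρ x ∂μ = 1) :
    IsProbabilityMeasure (μ.withDensity fun x => ENNReal.ofReal (ρ x)) := by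
  constructor
  rw [withDensity_apply _ .univ, Measure.restrict_univ,
    ← ofReal_integral_eq_lintegral_ofReal hρ_int (.of_forall hρ_nonneg), hρ_one,
    ENNReal.ofReal_one]

variable {φ : X → Y} {ν : Measure Y}

theorem integral_mul_comp_of_map_withDensity (hρ : Measurable ρ) (hρ_nonneg : ∀ x, 0 ≤ ρ x)
    (hφ : Measurable φ) (hmap : (μ.withDensity fun x => ENNReal.ofReal (ρ x)).map φ = ν)
    {g : Y → ℝ} (hg : AEStronglyMeasurable g ν) :
    ∫ x, ρ x * g (φ x) ∂μ = ∫ y, g y ∂ν := by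
  subst hmap
  rw [← integral_withDensity_ofReal hρ hρ_nonneg, integral_map hφ.aemeasurable hg]

theorem integrable_mul_comp_iff_of_map_withDensity (hρ : Measurable ρ)
    (hρ_nonneg : ∀ x, 0 ≤ ρ x) (hφ : Measurable φ)
    (hmap : (μ.withDensity fun x => ENNReal.ofReal (ρ x)).map φ = ν)
    {g : Y → ℝ} (hg : AEStronglyMeasurable g ν) :
    Integrable (fun x => ρ x * g (φ x)) μ ↔ Integrable g ν := by
  subst hmap
  rw [← integrable_withDensity_ofReal_iff hρ hρ_nonneg, integrable_map_measure hg hφ.aemeasurable]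
  rfl

theorem integral_mul_log_comp_of_map_withDensity (hρ : Measurable ρ) (hρ_nonneg : ∀ x, 0 ≤ ρ x)
    (hφ : Measurable φ) (hmap : (μ.withDensity fun x => ENNReal.ofReal (ρ x)).map φ = ν)
    {f : X → ℝ} {c : Y → ℝ} (hc : Measurable c) (hf : ∀ x, f x = ρ x * c (φ x)) :
    ∫ x, f x * Real.log (c (φ x)) ∂μ = ∫ y, c y * Real.log (c y) ∂ν := by
  simp_rw [hf, mul_assoc]
  exact integral_mul_comp_of_map_withDensity hρ hρ_nonneg hφ hmap
    (g := fun y => c y * Real.log (c y)) (by fun_prop)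

theorem integrable_mul_log_comp_iff_of_map_withDensity (hρ : Measurable ρ)
    (hρ_nonneg : ∀ x, 0 ≤ ρ x) (hφ : Measurable φ)
    (hmap : (μ.withDensity fun x => ENNReal.ofReal (ρ x)).map φ = ν)
    {f : X → ℝ} {c : Y → ℝ} (hc : Measurable c) (hf : ∀ x, f x = ρ x * c (φ x)) :
    Integrable (fun x => f x * Real.log (c (φ x))) μ ↔
      Integrable (fun y => c y * Real.log (c y)) ν := by
  simp_rw [hf, mul_assoc]
  exact integrable_mul_comp_iff_of_map_withDensity hρ hρ_nonneg hφ hmap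
    (g := fun y => c y * Real.log (c y)) (by fun_prop)

end WithDensity

theorem Measure.pi_withDensity_ofReal {ι : Type*} [Fintype ι] {α : ι → Type*}
    [∀ i, MeasurableSpace (α i)] (μ : ∀ i, Measure (α i)) [∀ i, SigmaFinite (μ i)]
    {ρ : ∀ i, α i → ℝ} (hρ_int : ∀ i, Integrable (ρ i) (μ i)) (hρ_nonneg : ∀ i x, 0 ≤ ρ i x)
    [∀ i, SigmaFinite ((μ i).withDensity fun x => ENNReal.ofReal (ρ i x))] :
    Measure.pi (fun i => (μ i).withDensity fun x => ENNReal.ofReal (ρ i x))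
      = (Measure.pi μ).withDensity fun x => ENNReal.ofReal (∏ i, ρ i (x i)) := by
  refine Measure.pi_eq fun s hs => ?_
  rw [withDensity_apply _ (.univ_pi hs), Measure.restrict_pi_pi,
    ← ofReal_integral_eq_lintegral_ofReal
      (Integrable.fintype_prod_dep fun i => (hρ_int i).restrict)
      (.of_forall fun x => Finset.prod_nonneg fun i _ => hρ_nonneg i (x i)),
    integral_fintype_prod_eq_prod,
    ENNReal.ofReal_prod_of_nonneg fun i _ => integral_nonneg fun x => hρ_nonneg i x]
  refine Finset.prod_congr rfl fun i _ => ?_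
  rw [withDensity_apply _ (hs i),
    ofReal_integral_eq_lintegral_ofReal (hρ_int i).restrict (.of_forall (hρ_nonneg i))]

section Marginal

open MeasurableEquiv

variable {ι α : Type*} [Fintype ι] [DecidableEq ι] [MeasureSpace α]

noncomputable def marginal (f : (ι → α) → ℝ) (i : ι) (t : α) : ℝ :=
  ∫ y, f ((funSplitAt i).symm (t, y))

variable {f : (ι → α) → ℝ}

theorem marginal_nonneg (hf_nonneg : ∀ x, 0 ≤ f x) (i : ι) (t : α) : 0 ≤ marginal f i t :=
  integral_nonneg fun _ => hf_nonneg _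

variable [SigmaFinite (volume : Measure α)]

@[fun_prop]
theorem measurable_marginal (hf : Measurable f) (i : ι) : Measurable (marginal f i) :=
  (hf.comp (funSplitAt i).symm.measurable).stronglyMeasurable.integral_prod_right'.measurable

theorem integrable_marginal (hf : Integrable f) (i : ι) : Integrable (marginal f i) :=
  (((measurePreserving_funSplitAt i).symm _).integrable_comp_emb
    (MeasurableEquiv.measurableEmbedding _) |>.mpr hf).integral_prod_left

theorem map_eval_withDensity_ofReal (hf : Measurable f) (hf_int : Integrable f)
    (hf_nonneg : ∀ x, 0 ≤ f x) (i : ι) :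
    (volume.withDensity fun x => ENNReal.ofReal (f x)).map (fun x => x i)
      = volume.withDensity fun t => ENNReal.ofReal (marginal f i t) := by
  have e_mp := (measurePreserving_funSplitAt (α := α) i).symm _
  have hfe : Integrable (f ∘ (funSplitAt i).symm) (volume.prod volume) :=
    (e_mp.integrable_comp_emb (MeasurableEquiv.measurableEmbedding _)).mpr hf_int
  ext s hs
  rw [Measure.map_apply (measurable_pi_apply i) hs, withDensity_apply _ (measurable_pi_apply i hs),
    withDensity_apply _ hs, ← e_mp.setLIntegral_comp_preimage_emb
      (MeasurableEquiv.measurableEmbedding _)]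
  have hpre : (funSplitAt i).symm ⁻¹' ((fun x : ι → α => x i) ⁻¹' s) = s ×ˢ univ := by
    ext p; simp
  rw [hpre, Measure.volume_eq_prod, ← Measure.prod_restrict, Measure.restrict_univ,
    lintegral_prod (fun p => ENNReal.ofReal (f ((funSplitAt i).symm p)))
      (hf.comp (funSplitAt i).symm.measurable).ennreal_ofReal.aemeasurable]
  refine lintegral_congr_ae (ae_restrict_of_ae ?_)
  filter_upwards [hfe.prod_right_ae] with t ht
  exact (ofReal_integral_eq_lintegral_ofReal ht (.of_forall fun _ => hf_nonneg _)).symm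

theorem integral_mul_comp_eval (hf : Measurable f) (hf_int : Integrable f)
    (hf_nonneg : ∀ x, 0 ≤ f x) (i : ι) {g : α → ℝ} (hg : Measurable g) :
    ∫ x, f x * g (x i) = ∫ t, marginal f i t * g t := by
  rw [integral_mul_comp_of_map_withDensity hf hf_nonneg (measurable_pi_apply i)
    (map_eval_withDensity_ofReal hf hf_int hf_nonneg i) hg.aestronglyMeasurable,
    integral_withDensity_ofReal (measurable_marginal hf i) (marginal_nonneg hf_nonneg i)]

theorem integrable_mul_comp_eval_iff (hf : Measurable f) (hf_int : Integrable f)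
    (hf_nonneg : ∀ x, 0 ≤ f x) (i : ι) {g : α → ℝ} (hg : Measurable g) :
    Integrable (fun x => f x * g (x i)) ↔ Integrable (fun t => marginal f i t * g t) := by
  rw [integrable_mul_comp_iff_of_map_withDensity hf hf_nonneg (measurable_pi_apply i)
    (map_eval_withDensity_ofReal hf hf_int hf_nonneg i) hg.aestronglyMeasurable,
    integrable_withDensity_ofReal_iff (measurable_marginal hf i) (marginal_nonneg hf_nonneg i)]

theorem integral_marginal (hf : Measurable f) (hf_int : Integrable f) (hf_nonneg : ∀ x, 0 ≤ f x)
    (i : ι) : ∫ t, marginal f i t = ∫ x, f x := by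
  simpa using (integral_mul_comp_eval hf hf_int hf_nonneg i (g := fun _ => (1 : ℝ))
    measurable_const).symm

end Marginal

section CDF

variable (μ : Measure ℝ)

theorem exists_cdf_eq (hcont : Continuous (cdf μ)) {u : ℝ} (hu0 : 0 < u) (hu1 : u < 1) :
    ∃ x, cdf μ x = u := by
  obtain ⟨a, ha⟩ := ((tendsto_cdf_atBot μ).eventually (gt_mem_nhds hu0)).exists
  obtain ⟨b, hb⟩ := ((tendsto_cdf_atTop μ).eventually (lt_mem_nhds hu1)).exists
  exact mem_range.mp (intermediate_value_univ a b hcont ⟨ha.le, hb.le⟩)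

theorem cdf_withDensity_ofReal {ρ : ℝ → ℝ} (hρ_int : Integrable ρ) (hρ_nonneg : ∀ t, 0 ≤ ρ t)
    (hρ_one : ∫ t, ρ t = 1) (x : ℝ) :
    cdf (volume.withDensity fun t => ENNReal.ofReal (ρ t)) x = ∫ t in Iic x, ρ t := by
  have := isProbabilityMeasure_withDensity_ofReal_s1 hρ_int hρ_nonneg hρ_one
  rw [cdf_eq_real, measureReal_def, withDensity_apply _ measurableSet_Iic,
    ← ofReal_integral_eq_lintegral_ofReal hρ_int.restrict (.of_forall hρ_nonneg),
    ENNReal.toReal_ofReal (setIntegral_nonneg measurableSet_Iic fun t _ => hρ_nonneg t)]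

theorem map_cdf_eq_restrict_Ioc [IsProbabilityMeasure μ] (hcont : Continuous (cdf μ))
    (hmono : StrictMono (cdf μ)) :
    μ.map (cdf μ) = volume.restrict (Ioc 0 1) := by
  have : IsProbabilityMeasure (μ.map (cdf μ)) :=
    Measure.isProbabilityMeasure_map hcont.measurable.aemeasurable
  refine Measure.ext_of_Iic _ _ fun u => ?_
  rw [Measure.map_apply hcont.measurable measurableSet_Iic,
    Measure.restrict_apply measurableSet_Iic]
  rcases le_or_gt u 0 with hu0 | hu0
  · have hpos (x : ℝ) : 0 < cdf μ x := (cdf_nonneg μ (x - 1)).trans_lt (hmono (by linarith))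
    have h1 : cdf μ ⁻¹' Iic u = ∅ :=
      eq_empty_of_forall_notMem fun x hx => (hpos x).not_ge (le_trans hx hu0)
    have h2 : Iic u ∩ Ioc (0 : ℝ) 1 = ∅ :=
      eq_empty_of_forall_notMem fun x hx => hx.2.1.not_ge (le_trans hx.1 hu0)
    rw [h1, h2, measure_empty, measure_empty]
  rcases lt_or_ge u 1 with hu1 | hu1
  · obtain ⟨x, rfl⟩ := exists_cdf_eq μ hcont hu0 hu1
    have h1 : cdf μ ⁻¹' Iic (cdf μ x) = Iic x := by ext y; exact hmono.le_iff_le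
    have h2 : Iic (cdf μ x) ∩ Ioc 0 1 = Ioc 0 (cdf μ x) := by
      ext y
      simp only [mem_inter_iff, mem_Iic, mem_Ioc]
      constructor
      · rintro ⟨hy, hy0, -⟩; exact ⟨hy0, hy⟩
      · rintro ⟨hy0, hy⟩; exact ⟨hy, hy0, hy.trans hu1.le⟩
    rw [h1, h2, ← ofReal_cdf, Real.volume_Ioc, sub_zero]
  · have h1 : cdf μ ⁻¹' Iic u = univ :=
      eq_univ_of_forall fun x => (cdf_le_one μ x).trans hu1
    have h2 : Iic u ∩ Ioc (0 : ℝ) 1 = Ioc 0 1 := inter_eq_right.mpr fun x hx => hx.2.trans hu1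
    rw [h1, h2, measure_univ, Real.volume_Ioc, sub_zero, ENNReal.ofReal_one]

end CDF

section Copula

variable {ι : Type*} [Fintype ι] (ν : ι → Measure ℝ) [∀ i, IsProbabilityMeasure (ν i)]

theorem map_pi_cdf_eq_restrict_Ioc (hcont : ∀ i, Continuous (cdf (ν i)))
    (hmono : ∀ i, StrictMono (cdf (ν i))) :
    (Measure.pi ν).map (fun x i => cdf (ν i) (x i))
      = volume.restrict (univ.pi fun _ => Ioc (0 : ℝ) 1) := by
  have := fun i => Measure.isProbabilityMeasure_map (μ := ν i) (hcont i).measurable.aemeasurable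
  rw [Measure.pi_map_pi fun i => (hcont i).measurable.aemeasurable, volume_pi,
    Measure.restrict_pi_pi]
  simp_rw [map_cdf_eq_restrict_Ioc _ (hcont _) (hmono _)]

theorem map_withDensity_prod_cdf_eq_restrict_Icc {ρ : ι → ℝ → ℝ}
    (hρ_int : ∀ i, Integrable (ρ i)) (hρ_nonneg : ∀ i t, 0 ≤ ρ i t)
    (hν : ∀ i, ν i = volume.withDensity fun t => ENNReal.ofReal (ρ i t))
    (hcont : ∀ i, Continuous (cdf (ν i))) (hmono : ∀ i, StrictMono (cdf (ν i))) :
    (volume.withDensity fun x : ι → ℝ => ENNReal.ofReal (∏ i, ρ i (x i))).map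
        (fun x i => cdf (ν i) (x i))
      = volume.restrict (univ.pi fun _ => Icc (0 : ℝ) 1) := by
  have : ∀ i, SigmaFinite (volume.withDensity fun t => ENNReal.ofReal (ρ i t)) := fun i =>
    hν i ▸ inferInstance
  rw [volume_pi, ← Measure.pi_withDensity_ofReal _ hρ_int hρ_nonneg, ← funext hν,
    map_pi_cdf_eq_restrict_Ioc ν hcont hmono]
  exact Measure.restrict_congr_set Measure.pi_Ioc_ae_eq_pi_Icc

end Copula

theorem mul_log_eq_sum_add_mul_log {ι : Type*} (s : Finset ι) {a : ι → ℝ} {b y : ℝ}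
    (hy : y = (∏ i ∈ s, a i) * b) :
    y * Real.log y = ∑ i ∈ s, y * Real.log (a i) + y * Real.log b := by
  rcases eq_or_ne y 0 with rfl | hy0
  · simp
  obtain ⟨hprod, hb⟩ := mul_ne_zero_iff.mp (hy ▸ hy0)
  rw [← Finset.mul_sum, ← mul_add,
    ← Real.log_prod fun i hi => Finset.prod_ne_zero_iff.mp hprod i hi, ← Real.log_mul hprod hb,
    ← hy]

theorem integral_mul_log_eq_sum_add {X ι : Type*} [MeasurableSpace X] {μ : Measure X}
    [Fintype ι] {f b : X → ℝ} {a : ι → X → ℝ} (hf : ∀ x, f x = (∏ i, a i x) * b x)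
    (ha : ∀ i, Integrable (fun x => f x * Real.log (a i x)) μ)
    (hb : Integrable (fun x => f x * Real.log (b x)) μ) :
    ∫ x, f x * Real.log (f x) ∂μ
      = ∑ i, ∫ x, f x * Real.log (a i x) ∂μ + ∫ x, f x * Real.log (b x) ∂μ := by
  rw [integral_congr_ae (.of_forall fun x => mul_log_eq_sum_add_mul_log _ (hf x)),
    integral_add (integrable_finsetSum _ fun i _ => ha i) hb,
    integral_finsetSum _ fun i _ => ha i]

theorem entropy_decomposition_general
    {n : ℕ} (f : (Fin n → ℝ) → ℝ) (fi : Fin n → ℝ → ℝ) (Fi : Fin n → ℝ → ℝ)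
    (c : (Fin n → ℝ) → ℝ)
    (hf_meas : Measurable f) (hc_meas : Measurable c)
    (hf_nonneg : ∀ x, 0 ≤ f x) (hfi_nonneg : ∀ i x, 0 ≤ fi i x)
    (hf_int : Integrable f) (hf_one : ∫ x, f x = 1)
    (hFi : ∀ i x, Fi i x = ∫ t in Iic x, fi i t)
    (hFi_mono : ∀ i, StrictMono (Fi i)) (hFi_cont : ∀ i, Continuous (Fi i))
    (hmarg : ∀ i x, fi i x = ∫ y : {j : Fin n // j ≠ i} → ℝ,
      f (fun j => if h : j = i then x else y ⟨j, h⟩))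
    (hSklar : ∀ x, f x = (∏ i, fi i (x i)) * c (fun i => Fi i (x i)))
    (hHi_int : ∀ i, Integrable (fun x => fi i x * Real.log (fi i x)))
    (hc_int : IntegrableOn (fun u => c u * Real.log (c u)) (univ.pi fun _ => Icc (0:ℝ) 1)) :
    (-∫ x, f x * Real.log (f x)) =
      (∑ i, -∫ x, fi i x * Real.log (fi i x)) +
        (-∫ u in (univ.pi fun _ => Icc (0:ℝ) 1), c u * Real.log (c u)) := by
  obtain rfl : fi = marginal f := funext fun i => funext fun t => by
    simp only [hmarg, marginal, MeasurableEquiv.funSplitAt_symm_apply]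
  have hfi_one (i : Fin n) : ∫ t, marginal f i t = 1 :=
    (integral_marginal hf_meas hf_int hf_nonneg i).trans hf_one
  set ν : Fin n → Measure ℝ := fun i =>
    volume.withDensity fun t => ENNReal.ofReal (marginal f i t)
  have hν (i : Fin n) : IsProbabilityMeasure (ν i) :=
    isProbabilityMeasure_withDensity_ofReal_s1 (integrable_marginal hf_int i) (hfi_nonneg i)
      (hfi_one i)
  have hcdf (i : Fin n) : ⇑(cdf (ν i)) = Fi i := funext fun x =>
    (cdf_withDensity_ofReal (integrable_marginal hf_int i) (hfi_nonneg i) (hfi_one i) x).trans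
      (hFi i x).symm
  simp only [← hcdf] at hFi_cont hFi_mono hSklar
  have hcube := map_withDensity_prod_cdf_eq_restrict_Icc ν (integrable_marginal hf_int)
    hfi_nonneg (fun _ => rfl) hFi_cont hFi_mono
  have hprod_nonneg (x : Fin n → ℝ) : 0 ≤ ∏ i, marginal f i (x i) :=
    Finset.prod_nonneg fun i _ => hfi_nonneg i (x i)
  have hT_int (i : Fin n) : Integrable fun x => f x * Real.log (marginal f i (x i)) :=
    (integrable_mul_comp_eval_iff hf_meas hf_int hf_nonneg i (by fun_prop)).2 (hHi_int i)
  have hT (i : Fin n) : ∫ x, f x * Real.log (marginal f i (x i))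
      = ∫ t, marginal f i t * Real.log (marginal f i t) :=
    integral_mul_comp_eval hf_meas hf_int hf_nonneg i (g := fun t => Real.log (marginal f i t))
      (by fun_prop)
  have hTc_int := (integrable_mul_log_comp_iff_of_map_withDensity (by fun_prop) hprod_nonneg
    (by fun_prop) hcube hc_meas hSklar).2 hc_int
  rw [integral_mul_log_eq_sum_add hSklar hT_int hTc_int, integral_mul_log_comp_of_map_withDensity
    (by fun_prop) hprod_nonneg (by fun_prop) hcube hc_meas hSklar, neg_add, Finset.sum_neg_distrib]
  simp_rw [hT]

/-- Entropy decomposition: joint differential entropy equals the sum of the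
marginal entropies plus the copula entropy. -/
theorem entropy_decomposition
    {n : ℕ} (f : (Fin n → ℝ) → ℝ) (fi : Fin n → ℝ → ℝ) (Fi : Fin n → ℝ → ℝ)
    (c : (Fin n → ℝ) → ℝ)
    (hf_meas : Measurable f) (hc_meas : Measurable c)
    (hf_nonneg : ∀ x, 0 ≤ f x) (hfi_nonneg : ∀ i x, 0 ≤ fi i x)
    (hf_int : Integrable f) (hf_one : ∫ x, f x = 1)
    (hFi : ∀ i x, Fi i x = ∫ t in Iic x, fi i t)
    (hFi_mono : ∀ i, StrictMono (Fi i)) (hFi_cont : ∀ i, Continuous (Fi i))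
    (hmarg : ∀ i x, fi i x = ∫ y : {j : Fin n // j ≠ i} → ℝ,
      f (fun j => if h : j = i then x else y ⟨j, h⟩))
    (hSklar : ∀ x, f x = (∏ i, fi i (x i)) * c (fun i => Fi i (x i)))
    (hH_int : Integrable (fun x => f x * Real.log (f x)))
    (hHi_int : ∀ i, Integrable (fun x => fi i x * Real.log (fi i x)))
    (hc_int : IntegrableOn (fun u => c u * Real.log (c u)) (univ.pi fun _ => Icc (0:ℝ) 1)) :
    (-∫ x, f x * Real.log (f x)) =
      (∑ i, -∫ x, fi i x * Real.log (fi i x)) +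
        (-∫ u in (univ.pi fun _ => Icc (0:ℝ) 1), c u * Real.log (c u)) :=
  entropy_decomposition_general f fi Fi c hf_meas hc_meas hf_nonneg hfi_nonneg hf_int hf_one hFi
    hFi_mono hFi_cont hmarg hSklar hHi_int hc_int
end
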